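/- arXiv:2110.14892 — 7 statements merged into one kernel-verified Lean document; each statement's English description precedes it below -/
import Mathlib

section
/- If a differentiable solution (S, E, I_a, I_s, H, R, D, R_a, R_s) of the extended SEIR system on [0, T] has all nine compartments nonnegative at time 0, then all nine compartments remain nonnegative on all of [0, T]. -/
/-!
The sum `m` of the negative parts of the nine compartments vanishes at time `0`. The vector field
is quasi-positive: when a compartment is nonpositive, minus its rate of change is at most a
constant times `m`, the bilinear infection terms being controlled by a bound on the solution over
the compact interval `[0, T]`. So `m` has right derivative at most `K * m`, and Grönwall's
inequality forces `m = 0`.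
-/

open Set Filter Topology

theorem HasDerivAt.hasDerivWithinAt_Ici_negPart_of_eq_zero {X : ℝ → ℝ} {d t : ℝ}
    (hX : HasDerivAt X d t) (h : X t = 0) :
    HasDerivWithinAt (fun s => (X s)⁻) d⁻ (Ici t) t := by
  rw [← hasDerivWithinAt_Ioi_iff_Ici, hasDerivWithinAt_iff_tendsto_slope' self_notMem_Ioi]
  have hslope := (hasDerivWithinAt_iff_tendsto_slope' self_notMem_Ioi).1 hX.hasDerivWithinAt
  -- to the right of `t`, the slope of `X⁻` is the negative part of the slope of `X`
  refine ((continuous_negPart.tendsto d).comp hslope).congr' ?_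
  filter_upwards [self_mem_nhdsWithin] with s hs
  have hst : 0 ≤ (s - t)⁻¹ := inv_nonneg.2 (sub_pos.2 hs).le
  simp only [Function.comp_apply, slope_def_field, h, sub_zero, negPart_zero, div_eq_inv_mul]
  simp only [negPart_def, mul_max_of_nonneg _ _ hst, mul_zero, mul_neg]

theorem HasDerivAt.exists_hasDerivWithinAt_Ici_negPart_le {X : ℝ → ℝ} {d t B : ℝ}
    (hX : HasDerivAt X d t) (hB : 0 ≤ B) (hdB : X t ≤ 0 → -d ≤ B) :
    ∃ D ≤ B, HasDerivWithinAt (fun s => (X s)⁻) D (Ici t) t := by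
  rcases lt_trichotomy (X t) 0 with hneg | hzero | hpos
  · have : (fun s => (X s)⁻) =ᶠ[𝓝 t] fun s => -X s := by
      filter_upwards [hX.continuousAt.eventually_lt continuousAt_const hneg] with s hs
      exact negPart_eq_neg.2 hs.le
    exact ⟨-d, hdB hneg.le, (hX.neg.congr_of_eventuallyEq this).hasDerivWithinAt⟩
  · exact ⟨d⁻, max_le (hdB hzero.le) hB, hX.hasDerivWithinAt_Ici_negPart_of_eq_zero hzero⟩
  · have : (fun s => (X s)⁻) =ᶠ[𝓝 t] fun _ => 0 := by
      filter_upwards [continuousAt_const.eventually_lt hX.continuousAt hpos] with s hs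
      exact negPart_eq_zero.2 hs.le
    exact ⟨0, hB, ((hasDerivAt_const t 0).congr_of_eventuallyEq this).hasDerivWithinAt⟩

theorem nonneg_of_neg_deriv_le_mul_sum_negPart {ι : Type*} [Fintype ι] {x x' : ι → ℝ → ℝ}
    {a b K : ℝ} (hx : ∀ i, ∀ t ∈ Icc a b, HasDerivAt (x i) (x' i t) t)
    (hx' : ∀ i, ∀ t ∈ Ico a b, x i t ≤ 0 → -x' i t ≤ K * ∑ j, (x j t)⁻)
    (ha : ∀ i, 0 ≤ x i a) :
    ∀ t ∈ Icc a b, ∀ i, 0 ≤ x i t := by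
  set m : ℝ → ℝ := fun t => ∑ j, (x j t)⁻
  -- a positive coordinate contributes right derivative `0`, hence the nonnegative rate `max K 0`
  set K' := Fintype.card ι * max K 0
  have hm_nonneg (t : ℝ) : 0 ≤ m t := Finset.sum_nonneg fun j _ => negPart_nonneg _
  have hm_cont : ContinuousOn m (Icc a b) := continuousOn_finsetSum _ fun j _ =>
    continuous_negPart.comp_continuousOn fun t ht => (hx j t ht).continuousAt.continuousWithinAt
  have hm_a : m a ≤ 0 := by simp [m, negPart_eq_zero.2 (ha _)]
  have hm_deriv (t : ℝ) (ht : t ∈ Ico a b) :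
      ∃ D ≤ K' * m t, HasDerivWithinAt m D (Ici t) t := by
    have hB : 0 ≤ max K 0 * m t := mul_nonneg (le_max_right _ _) (hm_nonneg t)
    have hdB (i : ι) : x i t ≤ 0 → -x' i t ≤ max K 0 * m t := fun hi =>
      (hx' i t ht hi).trans (mul_le_mul_of_nonneg_right (le_max_left _ _) (hm_nonneg t))
    choose D hDle hD using fun i =>
      (hx i t (Ico_subset_Icc_self ht)).exists_hasDerivWithinAt_Ici_negPart_le hB (hdB i)
    refine ⟨∑ i, D i, ?_, HasDerivWithinAt.fun_sum fun i _ => hD i⟩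
    calc ∑ i, D i ≤ ∑ _i : ι, max K 0 * m t := Finset.sum_le_sum fun i _ => hDle i
      _ = K' * m t := by simp [K', mul_assoc]
  have hm_zero : ∀ t ∈ Icc a b, m t ≤ 0 := by
    intro t ht
    simpa [gronwallBound_ε0_δ0] using le_gronwallBound_of_liminf_deriv_right_le
      (f' := fun t => K' * m t) (K := K') (ε := 0) hm_cont
      (fun t ht r hr => by
        obtain ⟨D, hDle, hD⟩ := hm_deriv t ht
        exact hD.liminf_right_slope_le (hDle.trans_lt hr)) hm_a (fun t _ => by simp) t ht
  intro t ht i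
  have hi : (x i t)⁻ ≤ m t :=
    Finset.single_le_sum (fun j _ => negPart_nonneg (x j t)) (Finset.mem_univ i)
  exact negPart_nonpos.1 (hi.trans (hm_zero t ht))

theorem neg_mul_le_mul_negPart_add_negPart {a b M : ℝ} (ha : |a| ≤ M) (hb : |b| ≤ M) :
    -(a * b) ≤ M * (a⁻ + b⁻) := by
  obtain ⟨ha₁, ha₂⟩ := abs_le.1 ha
  obtain ⟨hb₁, hb₂⟩ := abs_le.1 hb
  rcases le_total 0 a with ha₀ | ha₀ <;> rcases le_total 0 b with hb₀ | hb₀ <;>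
    simp only [negPart_eq_zero.2, negPart_eq_neg.2, *] <;> nlinarith

theorem infection_le_mul_negPart {βa βs N M a b s : ℝ} (hβa : 0 ≤ βa) (hβs : 0 ≤ βs)
    (hN : 0 ≤ N) (ha : |a| ≤ M) (hb : |b| ≤ M) (hs : s ≤ 0) :
    βa * a * s / N + βs * b * s / N ≤ (βa + βs) * M / N * s⁻ := by
  rw [negPart_eq_neg.2 hs, ← add_div, div_mul_eq_mul_div]
  gcongr
  nlinarith [abs_le.1 ha, abs_le.1 hb, mul_nonneg hβa (neg_nonneg.2 hs),
    mul_nonneg hβs (neg_nonneg.2 hs)]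

theorem neg_infection_le_mul_negPart {βa βs N M a b s : ℝ} (hβa : 0 ≤ βa) (hβs : 0 ≤ βs)
    (hN : 0 ≤ N) (ha : |a| ≤ M) (hb : |b| ≤ M) (hs : |s| ≤ M) :
    -(βa * a * s / N + βs * b * s / N) ≤ (βa + βs) * M / N * (s⁻ + a⁻ + b⁻) := by
  have hM : 0 ≤ M := (abs_nonneg s).trans hs
  have has := neg_mul_le_mul_negPart_add_negPart ha hs
  have hbs := neg_mul_le_mul_negPart_add_negPart hb hs
  rw [← add_div, ← neg_div, div_mul_eq_mul_div]
  gcongr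
  nlinarith [mul_nonneg (mul_nonneg hβa hM) (negPart_nonneg b),
    mul_nonneg (mul_nonneg hβs hM) (negPart_nonneg a)]

section extSEIR

variable (βa βs ε δ γa γs γH γD τH N : ℝ)

/-- Coordinates `0, …, 8` are `S, E, I_a, I_s, H, R, D, R_a, R_s`. -/
noncomputable def extSEIRField (u : Fin 9 → ℝ) : Fin 9 → ℝ :=
  ![-(βa * u 2 * u 0 / N) - βs * u 3 * u 0 / N,
    βa * u 2 * u 0 / N + βs * u 3 * u 0 / N - ε * u 1,
    ε * u 1 - δ * u 2 - γa * u 2,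
    δ * u 2 - τH * u 3 - γs * u 3,
    τH * u 3 - γH * u 4 - γD * u 4,
    γH * u 4, γD * u 4, γa * u 2, γs * u 3]

variable {βa βs ε δ γa γs γH γD τH N}

theorem exists_neg_extSEIRField_le_mul_sum_negPart (hβa : 0 ≤ βa) (hβs : 0 ≤ βs) (hε : 0 ≤ ε)
    (hδ : 0 ≤ δ) (hγa : 0 ≤ γa) (hγs : 0 ≤ γs) (hγH : 0 ≤ γH) (hγD : 0 ≤ γD) (hτH : 0 ≤ τH)
    (hN : 0 ≤ N) (M : ℝ) :
    ∃ K, ∀ u : Fin 9 → ℝ, ‖u‖ ≤ M → ∀ i, u i ≤ 0 →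
      -extSEIRField βa βs ε δ γa γs γH γD τH N u i ≤ K * ∑ j, (u j)⁻ := by
  set P := (βa + βs) * M / N
  set K := P + ε + δ + τH + γH + γD + γa + γs
  refine ⟨K, fun u hu i hi => ?_⟩
  have habs (j : Fin 9) : |u j| ≤ M := (norm_le_pi_norm u j).trans hu
  have hP : 0 ≤ P := by
    have hM : 0 ≤ M := (norm_nonneg u).trans hu
    positivity
  have hle (c : ℝ) (hc : 0 ≤ c) (hcK : c ≤ K) (s : Finset (Fin 9)) :
      c * ∑ j ∈ s, (u j)⁻ ≤ K * ∑ j, (u j)⁻ :=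
    mul_le_mul hcK (Finset.sum_le_sum_of_subset_of_nonneg s.subset_univ
      fun j _ _ => negPart_nonneg (u j)) (Finset.sum_nonneg fun j _ => negPart_nonneg (u j))
      (hc.trans hcK)
  fin_cases i <;> simp only [extSEIRField, Fin.reduceFinMk, Matrix.cons_val] at hi ⊢
  · refine (hle P hP (by linarith) {0}).trans' ?_
    rw [Finset.sum_singleton]
    linarith [infection_le_mul_negPart hβa hβs hN (habs 2) (habs 3) hi]
  · refine (hle P hP (by linarith) {0, 2, 3}).trans' ?_
    rw [Finset.sum_insert (by decide), Finset.sum_insert (by decide), Finset.sum_singleton]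
    linarith [neg_infection_le_mul_negPart hβa hβs hN (habs 2) (habs 3) (habs 0),
      mul_nonpos_of_nonneg_of_nonpos hε hi]
  · exact (hle ε hε (by linarith) {1}).trans' (by
      rw [Finset.sum_singleton]; nlinarith [neg_le_negPart (u 1)])
  · exact (hle δ hδ (by linarith) {2}).trans' (by
      rw [Finset.sum_singleton]; nlinarith [neg_le_negPart (u 2)])
  · exact (hle τH hτH (by linarith) {3}).trans' (by
      rw [Finset.sum_singleton]; nlinarith [neg_le_negPart (u 3)])
  · exact (hle γH hγH (by linarith) {4}).trans' (by
      rw [Finset.sum_singleton]; nlinarith [neg_le_negPart (u 4)])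
  · exact (hle γD hγD (by linarith) {4}).trans' (by
      rw [Finset.sum_singleton]; nlinarith [neg_le_negPart (u 4)])
  · exact (hle γa hγa (by linarith) {2}).trans' (by
      rw [Finset.sum_singleton]; nlinarith [neg_le_negPart (u 2)])
  · exact (hle γs hγs (by linarith) {3}).trans' (by
      rw [Finset.sum_singleton]; nlinarith [neg_le_negPart (u 3)])

end extSEIR

theorem extSEIR_nonneg_invariant_general
    (βa βs ε δ γa γs γH γD τH N : ℝ)
    (hβa : 0 < βa) (hβs : 0 < βs) (hε : 0 < ε) (hδ : 0 < δ)
    (hγa : 0 < γa) (hγs : 0 < γs) (hγH : 0 < γH) (hγD : 0 < γD)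
    (hτH : 0 < τH) (hN : 0 < N)
    (T : ℝ) (S E Ia Is H R D Ra Rs : ℝ → ℝ)
    (hS : ∀ t ∈ Icc 0 T, HasDerivAt S (-(βa * Ia t * S t / N) - βs * Is t * S t / N) t)
    (hE : ∀ t ∈ Icc 0 T, HasDerivAt E (βa * Ia t * S t / N + βs * Is t * S t / N - ε * E t) t)
    (hIa : ∀ t ∈ Icc 0 T, HasDerivAt Ia (ε * E t - δ * Ia t - γa * Ia t) t)
    (hIs : ∀ t ∈ Icc 0 T, HasDerivAt Is (δ * Ia t - τH * Is t - γs * Is t) t)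
    (hH : ∀ t ∈ Icc 0 T, HasDerivAt H (τH * Is t - γH * H t - γD * H t) t)
    (hR : ∀ t ∈ Icc 0 T, HasDerivAt R (γH * H t) t)
    (hD : ∀ t ∈ Icc 0 T, HasDerivAt D (γD * H t) t)
    (hRa : ∀ t ∈ Icc 0 T, HasDerivAt Ra (γa * Ia t) t)
    (hRs : ∀ t ∈ Icc 0 T, HasDerivAt Rs (γs * Is t) t)
    (h0 : 0 ≤ S 0 ∧ 0 ≤ E 0 ∧ 0 ≤ Ia 0 ∧ 0 ≤ Is 0 ∧ 0 ≤ H 0 ∧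
          0 ≤ R 0 ∧ 0 ≤ D 0 ∧ 0 ≤ Ra 0 ∧ 0 ≤ Rs 0) :
    ∀ t ∈ Icc 0 T, 0 ≤ S t ∧ 0 ≤ E t ∧ 0 ≤ Ia t ∧ 0 ≤ Is t ∧ 0 ≤ H t ∧
      0 ≤ R t ∧ 0 ≤ D t ∧ 0 ≤ Ra t ∧ 0 ≤ Rs t := by
  set x : Fin 9 → ℝ → ℝ := ![S, E, Ia, Is, H, R, D, Ra, Rs]
  have hx : ∀ i, ∀ t ∈ Icc 0 T,
      HasDerivAt (x i) (extSEIRField βa βs ε δ γa γs γH γD τH N (fun j => x j t) i) t := by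
    intro i
    fin_cases i
    exacts [hS, hE, hIa, hIs, hH, hR, hD, hRa, hRs]
  obtain ⟨M, hM⟩ := isCompact_Icc.exists_bound_of_continuousOn (f := fun t j => x j t)
    (continuousOn_pi.2 fun j t ht => (hx j t ht).continuousAt.continuousWithinAt)
  obtain ⟨K, hK⟩ := exists_neg_extSEIRField_le_mul_sum_negPart hβa.le hβs.le hε.le hδ.le hγa.le
    hγs.le hγH.le hγD.le hτH.le hN.le M
  have hx_nonneg := nonneg_of_neg_deriv_le_mul_sum_negPart (K := K) hx
    (fun i t ht => hK _ (hM t (Ico_subset_Icc_self ht)) i)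
    (by simpa [Fin.forall_fin_succ, x] using h0)
  intro t ht
  simpa [Fin.forall_fin_succ, x] using hx_nonneg t ht

/-- If a differentiable solution of the extended SEIR system on `[0, T]` has all nine
compartments nonnegative at time `0`, then all nine compartments remain nonnegative
on all of `[0, T]`. -/
theorem extSEIR_nonneg_invariant
    (βa βs ε δ γa γs γH γD τH N : ℝ)
    (hβa : 0 < βa) (hβs : 0 < βs) (hε : 0 < ε) (hδ : 0 < δ)
    (hγa : 0 < γa) (hγs : 0 < γs) (hγH : 0 < γH) (hγD : 0 < γD)
    (hτH : 0 < τH) (hN : 0 < N)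
    (T : ℝ) (hT : 0 ≤ T) (S E Ia Is H R D Ra Rs : ℝ → ℝ)
    (hS : ∀ t ∈ Icc 0 T, HasDerivAt S (-(βa * Ia t * S t / N) - βs * Is t * S t / N) t)
    (hE : ∀ t ∈ Icc 0 T, HasDerivAt E (βa * Ia t * S t / N + βs * Is t * S t / N - ε * E t) t)
    (hIa : ∀ t ∈ Icc 0 T, HasDerivAt Ia (ε * E t - δ * Ia t - γa * Ia t) t)
    (hIs : ∀ t ∈ Icc 0 T, HasDerivAt Is (δ * Ia t - τH * Is t - γs * Is t) t)
    (hH : ∀ t ∈ Icc 0 T, HasDerivAt H (τH * Is t - γH * H t - γD * H t) t)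
    (hR : ∀ t ∈ Icc 0 T, HasDerivAt R (γH * H t) t)
    (hD : ∀ t ∈ Icc 0 T, HasDerivAt D (γD * H t) t)
    (hRa : ∀ t ∈ Icc 0 T, HasDerivAt Ra (γa * Ia t) t)
    (hRs : ∀ t ∈ Icc 0 T, HasDerivAt Rs (γs * Is t) t)
    (h0 : 0 ≤ S 0 ∧ 0 ≤ E 0 ∧ 0 ≤ Ia 0 ∧ 0 ≤ Is 0 ∧ 0 ≤ H 0 ∧
          0 ≤ R 0 ∧ 0 ≤ D 0 ∧ 0 ≤ Ra 0 ∧ 0 ≤ Rs 0) :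
    ∀ t ∈ Icc 0 T, 0 ≤ S t ∧ 0 ≤ E t ∧ 0 ≤ Ia t ∧ 0 ≤ Is t ∧ 0 ≤ H t ∧
      0 ≤ R t ∧ 0 ≤ D t ∧ 0 ≤ Ra t ∧ 0 ≤ Rs t :=
  extSEIR_nonneg_invariant_general βa βs ε δ γa γs γH γD τH N hβa hβs hε hδ hγa hγs hγH hγD hτH hN T
    S E Ia Is H R D Ra Rs hS hE hIa hIs hH hR hD hRa hRs h0
end

section
/- Along any differentiable solution of the extended SEIR system on [0, T] whose compartments are all nonnegative and sum to N on [0, T], one has the lower bound S(t) ≥ S(0) · exp(−(β_a + β_s) t) for all t in [0, T]; in particular, if S(0) > 0 then S(t) > 0 for all t in [0, T]. -/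
open Set Real

/-!
Since `I_a` and `I_s` are at most `N` (all compartments are nonnegative and sum to `N`), the force
of infection is at most `β_a + β_s`, so `S' ≥ -(β_a + β_s) S`. Grönwall's inequality applied to
`-S` then yields the exponential lower bound.
-/

theorem mul_exp_le_of_neg_mul_le_deriv {f f' : ℝ → ℝ} {k a b : ℝ}
    (hf : ∀ t ∈ Icc a b, HasDerivAt f (f' t) t) (hbound : ∀ t ∈ Icc a b, -k * f t ≤ f' t) :
    ∀ t ∈ Icc a b, f a * exp (-k * (t - a)) ≤ f t := by
  intro t ht
  have hneg := le_gronwallBound_of_liminf_deriv_right_le (f := fun t => -f t)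
    (f' := fun t => -f' t) (K := -k) (ε := 0)
    (HasDerivAt.continuousOn fun t ht => (hf t ht).neg)
    (fun x hx _ hr => (hf x (Ico_subset_Icc_self hx)).neg.hasDerivWithinAt.liminf_right_slope_le hr)
    le_rfl (fun x hx => by linarith [hbound x (Ico_subset_Icc_self hx)]) t ht
  rw [gronwallBound_ε0] at hneg
  linarith

theorem mul_mul_div_le_mul_of_le {β I S N : ℝ} (hβ : 0 ≤ β) (hS : 0 ≤ S) (hN : 0 < N)
    (hI : I ≤ N) : β * I * S / N ≤ β * S := by
  rw [div_le_iff₀ hN]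
  nlinarith [mul_nonneg (mul_nonneg hβ hS) (sub_nonneg.mpr hI)]

theorem extSEIR_susceptible_lower_bound_general
    (βa βs N : ℝ)
    (hβa : 0 < βa) (hβs : 0 < βs)
    (hN : 0 < N)
    (T : ℝ) (S E Ia Is H R D Ra Rs : ℝ → ℝ)
    (hS : ∀ t ∈ Icc 0 T, HasDerivAt S (-(βa * Ia t * S t / N) - βs * Is t * S t / N) t)
    (hnonneg : ∀ t ∈ Icc 0 T, 0 ≤ S t ∧ 0 ≤ E t ∧ 0 ≤ Ia t ∧ 0 ≤ Is t ∧ 0 ≤ H t ∧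
      0 ≤ R t ∧ 0 ≤ D t ∧ 0 ≤ Ra t ∧ 0 ≤ Rs t)
    (hsum : ∀ t ∈ Icc 0 T,
      S t + E t + Ia t + Is t + H t + R t + D t + Ra t + Rs t = N) :
    (∀ t ∈ Icc 0 T, S 0 * Real.exp (-(βa + βs) * t) ≤ S t) ∧
      (0 < S 0 → ∀ t ∈ Icc 0 T, 0 < S t) := by
  have hdecay : ∀ t ∈ Icc 0 T,
      -(βa + βs) * S t ≤ -(βa * Ia t * S t / N) - βs * Is t * S t / N := by
    intro t ht
    obtain ⟨hS0, hE0, hIa0, hIs0, hH0, hR0, hD0, hRa0, hRs0⟩ := hnonneg t ht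
    have hIaN : Ia t ≤ N := by linarith [hsum t ht]
    have hIsN : Is t ≤ N := by linarith [hsum t ht]
    linarith [mul_mul_div_le_mul_of_le hβa.le hS0 hN hIaN,
      mul_mul_div_le_mul_of_le hβs.le hS0 hN hIsN]
  have hlower : ∀ t ∈ Icc 0 T, S 0 * exp (-(βa + βs) * t) ≤ S t := by
    simpa only [sub_zero] using mul_exp_le_of_neg_mul_le_deriv hS hdecay
  exact ⟨hlower, fun hS0 t ht => (mul_pos hS0 (exp_pos _)).trans_le (hlower t ht)⟩

/-- Along any differentiable nonnegative solution of the extended SEIR system on `[0, T]`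
whose compartments sum to `N`, one has `S t ≥ S 0 * exp (-(βa + βs) t)` on `[0, T]`;
in particular, if `S 0 > 0` then `S` stays positive on `[0, T]`. -/
theorem extSEIR_susceptible_lower_bound
    (βa βs ε δ γa γs γH γD τH N : ℝ)
    (hβa : 0 < βa) (hβs : 0 < βs) (hε : 0 < ε) (hδ : 0 < δ)
    (hγa : 0 < γa) (hγs : 0 < γs) (hγH : 0 < γH) (hγD : 0 < γD)
    (hτH : 0 < τH) (hN : 0 < N)
    (T : ℝ) (hT : 0 ≤ T) (S E Ia Is H R D Ra Rs : ℝ → ℝ)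
    (hS : ∀ t ∈ Icc 0 T, HasDerivAt S (-(βa * Ia t * S t / N) - βs * Is t * S t / N) t)
    (hE : ∀ t ∈ Icc 0 T, HasDerivAt E (βa * Ia t * S t / N + βs * Is t * S t / N - ε * E t) t)
    (hIa : ∀ t ∈ Icc 0 T, HasDerivAt Ia (ε * E t - δ * Ia t - γa * Ia t) t)
    (hIs : ∀ t ∈ Icc 0 T, HasDerivAt Is (δ * Ia t - τH * Is t - γs * Is t) t)
    (hH : ∀ t ∈ Icc 0 T, HasDerivAt H (τH * Is t - γH * H t - γD * H t) t)
    (hR : ∀ t ∈ Icc 0 T, HasDerivAt R (γH * H t) t)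
    (hD : ∀ t ∈ Icc 0 T, HasDerivAt D (γD * H t) t)
    (hRa : ∀ t ∈ Icc 0 T, HasDerivAt Ra (γa * Ia t) t)
    (hRs : ∀ t ∈ Icc 0 T, HasDerivAt Rs (γs * Is t) t)
    (hnonneg : ∀ t ∈ Icc 0 T, 0 ≤ S t ∧ 0 ≤ E t ∧ 0 ≤ Ia t ∧ 0 ≤ Is t ∧ 0 ≤ H t ∧
      0 ≤ R t ∧ 0 ≤ D t ∧ 0 ≤ Ra t ∧ 0 ≤ Rs t)
    (hsum : ∀ t ∈ Icc 0 T,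
      S t + E t + Ia t + Is t + H t + R t + D t + Ra t + Rs t = N) :
    (∀ t ∈ Icc 0 T, S 0 * Real.exp (-(βa + βs) * t) ≤ S t) ∧
      (0 < S 0 → ∀ t ∈ Icc 0 T, 0 < S t) :=
  extSEIR_susceptible_lower_bound_general βa βs N hβa hβs hN T S E Ia Is H R D Ra Rs hS hnonneg hsum
end

section
/- Let F be the 3×3 real matrix with first row (0, β_a, β_s) and all other entries zero, and let V be the 3×3 real matrix with rows (ε, 0, 0), (−ε, δ + γ_a, 0), (0, −δ, γ_s + τ_H), where all parameters are positive. Then V is invertible and the characteristic polynomial of the next-generation matrix F V⁻¹ is X²(X − R₀); equivalently, the eigenvalues of F V⁻¹ are 0, 0, and R₀, where R₀ = β_a/(δ + γ_a) + β_s δ/((δ + γ_a)(γ_s + τ_H)). -/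
open Matrix Polynomial

/-! The next-generation matrix `F V⁻¹` inherits from `F` the property that only its first row is
nonzero, so it is upper triangular with diagonal `((F V⁻¹) 0 0, 0, 0)`. Inverting the lower
bidiagonal `V` explicitly shows `(F V⁻¹) 0 0 = R₀`. -/

namespace Matrix

theorem charpoly_eq_X_pow_mul_of_row_eq_zero {R : Type*} [CommRing R] {n : ℕ}
    (M : Matrix (Fin (n + 1)) (Fin (n + 1)) R) (hM : ∀ i ≠ 0, ∀ j, M i j = 0) :
    M.charpoly = X ^ n * (X - C (M 0 0)) := by
  have hM_upper : M.IsUpperTriangular := fun i j hji => hM i ((Fin.zero_le j).trans_lt hji).ne' j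
  rw [charpoly_of_isUpperTriangular M hM_upper, Fin.prod_univ_succ, mul_comm]
  simp [hM _ (Fin.succ_ne_zero _)]

theorem mul_apply_eq_zero_of_row_eq_zero {R : Type*} [NonUnitalNonAssocSemiring R]
    {l m n : Type*} [Fintype m] {A : Matrix l m R} {i : l} (hA : ∀ j, A i j = 0)
    (B : Matrix m n R) (k : n) : (A * B) i k = 0 := by
  simp [mul_apply, hA]

theorem det_seirTransition {R : Type*} [CommRing R] (a b c d : R) :
    det !![a, 0, 0; -a, b, 0; 0, -d, c] = a * b * c := by
  simp [det_fin_three]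

theorem inv_seirTransition {K : Type*} [Field K] (a b c d : K)
    (ha : a ≠ 0) (hb : b ≠ 0) (hc : c ≠ 0) :
    !![a, 0, 0; -a, b, 0; 0, -d, c]⁻¹ =
      !![a⁻¹, 0, 0; b⁻¹, b⁻¹, 0; d / (b * c), d / (b * c), c⁻¹] := by
  refine inv_eq_right_inv ?_
  ext i j
  fin_cases i <;> fin_cases j <;> simp [mul_apply, Fin.sum_univ_three] <;> field_simp <;> ring

end Matrix

theorem extSEIR_next_generation_charpoly_general
    (βa βs ε δ γa γs τH : ℝ)
    (hε : 0 < ε) (hδ : 0 < δ)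
    (hγa : 0 < γa) (hγs : 0 < γs) (hτH : 0 < τH)
    (F V : Matrix (Fin 3) (Fin 3) ℝ)
    (hF : F = !![0, βa, βs; 0, 0, 0; 0, 0, 0])
    (hV : V = !![ε, 0, 0; -ε, δ + γa, 0; 0, -δ, γs + τH])
    (R₀ : ℝ)
    (hR₀ : R₀ = βa / (δ + γa) + βs * δ / ((δ + γa) * (γs + τH))) :
    IsUnit V.det ∧ (F * V⁻¹).charpoly = X ^ 2 * (X - C R₀) := by
  have hδγa : δ + γa ≠ 0 := by positivity
  have hγsτH : γs + τH ≠ 0 := by positivity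
  have hF_rows : ∀ i ≠ 0, ∀ j, F i j = 0 := by
    intro i hi j
    subst hF
    fin_cases i <;> fin_cases j <;> simp_all
  have hNGM_00 : (F * V⁻¹) 0 0 = R₀ := by
    rw [hF, hV, inv_seirTransition _ _ _ _ hε.ne' hδγa hγsτH, hR₀]
    simp only [mul_apply, of_apply, cons_val', cons_val_fin_one, cons_val_zero, cons_val_one,
      cons_val, Fin.sum_univ_three, zero_mul, zero_add]
    field_simp
  refine ⟨by rw [hV, det_seirTransition]; exact isUnit_iff_ne_zero.2 (by positivity), ?_⟩
  rw [charpoly_eq_X_pow_mul_of_row_eq_zero _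
    (fun i hi => mul_apply_eq_zero_of_row_eq_zero (hF_rows i hi) V⁻¹), hNGM_00]

/-- For the extended SEIR model, the transition matrix `V` is invertible and the
characteristic polynomial of the next-generation matrix `F * V⁻¹` is `X² (X - R₀)`,
so its eigenvalues are `0, 0, R₀`. -/
theorem extSEIR_next_generation_charpoly
    (βa βs ε δ γa γs τH : ℝ)
    (hβa : 0 < βa) (hβs : 0 < βs) (hε : 0 < ε) (hδ : 0 < δ)
    (hγa : 0 < γa) (hγs : 0 < γs) (hτH : 0 < τH)
    (F V : Matrix (Fin 3) (Fin 3) ℝ)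
    (hF : F = !![0, βa, βs; 0, 0, 0; 0, 0, 0])
    (hV : V = !![ε, 0, 0; -ε, δ + γa, 0; 0, -δ, γs + τH])
    (R₀ : ℝ)
    (hR₀ : R₀ = βa / (δ + γa) + βs * δ / ((δ + γa) * (γs + τH))) :
    IsUnit V.det ∧ (F * V⁻¹).charpoly = X ^ 2 * (X - C R₀) :=
  extSEIR_next_generation_charpoly_general βa βs ε δ γa γs τH hε hδ hγa hγs hτH F V hF hV R₀ hR₀
end

section
/- Let J be the 3×3 real matrix with rows (−ε, β_a, β_s), (ε, −(δ + γ_a), 0), (0, δ, −(γ_s + τ_H)), where all parameters are positive. If R₀ < 1, where R₀ = β_a/(δ + γ_a) + β_s δ/((δ + γ_a)(γ_s + τ_H)), then every complex root of the characteristic polynomial of J has strictly negative real part (i.e. the disease-free equilibrium is linearly stable). -/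
/-!
If `Re z ≥ 0` then `‖z + t‖ ≥ t` for every real `t ≥ 0`. Taking norms in the characteristic
equation `(z + ε)(z + a)(z + b) = ε (βa (z + b) + βs δ)`, with `a = δ + γa`, `b = γs + τH`,
therefore gives `a ‖z + b‖ ≤ βa ‖z + b‖ + βs δ`, hence `(a - βa) b ≤ βs δ`; but `R₀ < 1` says
exactly `βa b + βs δ < a b`.
-/

open Matrix Polynomial

theorem charpoly_sEIR_jacobian {R : Type*} [CommRing R] (ε βa βs δ a b : R) :
    (!![-ε, βa, βs; ε, -a, 0; 0, δ, -b] : Matrix (Fin 3) (Fin 3) R).charpoly =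
      (X + C ε) * (X + C a) * (X + C b) - C ε * (C βa * (X + C b) + C (βs * δ)) := by
  rw [Matrix.charpoly, Matrix.det_fin_three]
  simp [charmatrix_apply_eq, charmatrix_apply_ne]
  ring

theorem Complex.le_norm_add_ofReal_of_re_nonneg {z : ℂ} (hz : 0 ≤ z.re) (t : ℝ) :
    t ≤ ‖z + t‖ :=
  calc t ≤ (z + t).re := by simpa using hz
    _ ≤ ‖z + t‖ := Complex.re_le_norm _

theorem re_neg_of_sEIR_char_eq {ε βa βs δ a b : ℝ} (hε : 0 < ε) (hβa : 0 ≤ βa)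
    (hβs : 0 ≤ βs) (hδ : 0 ≤ δ) (hb : 0 ≤ b) (hR : βa * b + βs * δ < a * b) {z : ℂ}
    (hz : (z + ε) * (z + a) * (z + b) = ε * (βa * (z + b) + βs * δ)) : z.re < 0 := by
  by_contra! hre
  have hβa_lt : βa < a := by nlinarith [mul_nonneg hβs hδ]
  set K := ‖z + b‖
  have hbK : b ≤ K := Complex.le_norm_add_ofReal_of_re_nonneg hre b
  have hnorm : ε * a * K ≤ ε * (βa * K + βs * δ) :=
    calc ε * a * K ≤ ‖z + ε‖ * ‖z + a‖ * K := by
          gcongr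
          · exact hβa.trans hβa_lt.le
          · exact Complex.le_norm_add_ofReal_of_re_nonneg hre ε
          · exact Complex.le_norm_add_ofReal_of_re_nonneg hre a
      _ = ‖(ε : ℂ) * (βa * (z + b) + βs * δ)‖ := by rw [← hz, norm_mul, norm_mul]
      _ ≤ ε * (βa * K + βs * δ) := by
          rw [norm_mul, Complex.norm_of_nonneg hε.le]
          gcongr
          refine (norm_add_le _ _).trans_eq ?_
          rw [norm_mul, norm_mul, Complex.norm_of_nonneg hβa, Complex.norm_of_nonneg hβs,
            Complex.norm_of_nonneg hδ]
  have haK : a * K ≤ βa * K + βs * δ :=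
    le_of_mul_le_mul_left (by rwa [mul_assoc] at hnorm) hε
  linarith [mul_le_mul_of_nonneg_left hbK (sub_nonneg.mpr hβa_lt.le)]

/-- If `R₀ < 1`, every complex root of the characteristic polynomial of the Jacobian `J`
of the infected subsystem at the disease-free equilibrium has strictly negative real
part: the disease-free equilibrium is linearly stable. -/
theorem extSEIR_DFE_linearly_stable
    (βa βs ε δ γa γs τH : ℝ)
    (hβa : 0 < βa) (hβs : 0 < βs) (hε : 0 < ε) (hδ : 0 < δ)
    (hγa : 0 < γa) (hγs : 0 < γs) (hτH : 0 < τH)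
    (J : Matrix (Fin 3) (Fin 3) ℝ)
    (hJ : J = !![-ε, βa, βs; ε, -(δ + γa), 0; 0, δ, -(γs + τH)])
    (hR₀ : βa / (δ + γa) + βs * δ / ((δ + γa) * (γs + τH)) < 1) :
    ∀ z : ℂ, (J.charpoly.map (algebraMap ℝ ℂ)).IsRoot z → z.re < 0 := by
  intro z hz
  have hb : 0 < γs + τH := by positivity
  have hR : βa * (γs + τH) + βs * δ < (δ + γa) * (γs + τH) := by
    rwa [← div_lt_one (by positivity), add_div, mul_div_mul_right _ _ hb.ne']
  refine re_neg_of_sEIR_char_eq hε hβa.le hβs.le hδ.le hb.le hR ?_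
  rw [hJ, charpoly_sEIR_jacobian] at hz
  simp only [IsRoot, Polynomial.map_sub, Polynomial.map_mul, Polynomial.map_add, map_X, map_C,
    eval_sub, eval_mul, eval_add, eval_X, eval_C, Complex.coe_algebraMap] at hz
  push_cast at hz ⊢
  linear_combination hz
end

section
/- Let J be the 3×3 real matrix with rows (−ε, β_a, β_s), (ε, −(δ + γ_a), 0), (0, δ, −(γ_s + τ_H)), where all parameters are positive. If R₀ > 1, where R₀ = β_a/(δ + γ_a) + β_s δ/((δ + γ_a)(γ_s + τ_H)), then the characteristic polynomial of J has a strictly positive real root; in particular J has an eigenvalue with positive real part (i.e. the disease-free equilibrium is unstable). -/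
/-!
The characteristic polynomial of `J` is monic of degree 3, and its value at `0` is
`-det J = ε ((δ + γa)(γs + τH) - βa (γs + τH) - βs δ)`, which is negative exactly when `R₀ > 1`.
A real polynomial that is negative at `0` and tends to `+∞` has a positive root.
-/

open Matrix Polynomial

theorem Polynomial.exists_pos_isRoot_of_leadingCoeff_pos_of_eval_zero_neg {p : ℝ[X]}
    (hp : 0 < p.leadingCoeff) (h0 : p.eval 0 < 0) : ∃ x, 0 < x ∧ p.IsRoot x := by
  have hdeg : 0 < p.degree := by
    by_contra! hle
    rw [eq_C_of_degree_le_zero hle, eval_C] at h0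
    rw [eq_C_of_degree_le_zero hle, leadingCoeff_C] at hp
    linarith
  obtain ⟨M, hM⟩ := Filter.eventually_atTop.mp
    ((p.tendsto_atTop_of_leadingCoeff_nonneg hdeg hp.le).eventually_gt_atTop 0)
  obtain ⟨x, hx, hroot⟩ := intermediate_value_Ioo (by positivity : (0 : ℝ) ≤ max M 1)
    p.continuousOn ⟨h0, hM _ (le_max_left M 1)⟩
  exact ⟨x, hx.1, hroot⟩

theorem Matrix.exists_pos_isRoot_charpoly_of_det_pos {n : Type*} [Fintype n] [DecidableEq n]
    (hn : Odd (Fintype.card n)) {A : Matrix n n ℝ} (hA : 0 < A.det) :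
    ∃ x, 0 < x ∧ A.charpoly.IsRoot x := by
  refine exists_pos_isRoot_of_leadingCoeff_pos_of_eval_zero_neg ?_ ?_
  · rw [A.charpoly_monic.leadingCoeff]
    exact one_pos
  · rw [det_eq_sign_charpoly_coeff, hn.neg_one_pow, coeff_zero_eq_eval_zero] at hA
    linarith

theorem det_extSEIR_jacobian (βa βs ε δ γa γs τH : ℝ) :
    (!![-ε, βa, βs; ε, -(δ + γa), 0; 0, δ, -(γs + τH)] : Matrix (Fin 3) (Fin 3) ℝ).det
      = ε * (βa * (γs + τH) + βs * δ - (δ + γa) * (γs + τH)) := by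
  rw [det_fin_three]
  simp only [of_apply, cons_val', cons_val_zero, cons_val_one, cons_val, cons_val_fin_one]
  ring

theorem det_extSEIR_jacobian_pos {βa βs ε δ γa γs τH : ℝ} (hε : 0 < ε)
    (ha : 0 < δ + γa) (hb : 0 < γs + τH)
    (hR₀ : 1 < βa / (δ + γa) + βs * δ / ((δ + γa) * (γs + τH))) :
    0 < (!![-ε, βa, βs; ε, -(δ + γa), 0; 0, δ, -(γs + τH)] : Matrix (Fin 3) (Fin 3) ℝ).det := by
  have hR : (δ + γa) * (γs + τH) < βa * (γs + τH) + βs * δ := by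
    field_simp at hR₀
    linarith
  rw [det_extSEIR_jacobian]
  exact mul_pos hε (by linarith)

theorem extSEIR_DFE_unstable_general
    (βa βs ε δ γa γs τH : ℝ)
    (hε : 0 < ε) (hδ : 0 < δ)
    (hγa : 0 < γa) (hγs : 0 < γs) (hτH : 0 < τH)
    (J : Matrix (Fin 3) (Fin 3) ℝ)
    (hJ : J = !![-ε, βa, βs; ε, -(δ + γa), 0; 0, δ, -(γs + τH)])
    (hR₀ : 1 < βa / (δ + γa) + βs * δ / ((δ + γa) * (γs + τH))) :
    (∃ x : ℝ, 0 < x ∧ J.charpoly.IsRoot x) ∧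
      ∃ z : ℂ, (J.charpoly.map (algebraMap ℝ ℂ)).IsRoot z ∧ 0 < z.re := by
  have hdet : 0 < J.det :=
    hJ ▸ det_extSEIR_jacobian_pos hε (by positivity) (by positivity) hR₀
  obtain ⟨x, hx, hroot⟩ := exists_pos_isRoot_charpoly_of_det_pos (by decide) hdet
  exact ⟨⟨x, hx, hroot⟩, x, hroot.map, by simpa using hx⟩

/-- If `R₀ > 1`, the characteristic polynomial of the Jacobian `J` of the infected
subsystem at the disease-free equilibrium has a strictly positive real root; in
particular `J` has an eigenvalue with positive real part, so the disease-free
equilibrium is unstable. -/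
theorem extSEIR_DFE_unstable
    (βa βs ε δ γa γs τH : ℝ)
    (hβa : 0 < βa) (hβs : 0 < βs) (hε : 0 < ε) (hδ : 0 < δ)
    (hγa : 0 < γa) (hγs : 0 < γs) (hτH : 0 < τH)
    (J : Matrix (Fin 3) (Fin 3) ℝ)
    (hJ : J = !![-ε, βa, βs; ε, -(δ + γa), 0; 0, δ, -(γs + τH)])
    (hR₀ : 1 < βa / (δ + γa) + βs * δ / ((δ + γa) * (γs + τH))) :
    (∃ x : ℝ, 0 < x ∧ J.charpoly.IsRoot x) ∧
      ∃ z : ℂ, (J.charpoly.map (algebraMap ℝ ℂ)).IsRoot z ∧ 0 < z.re :=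
  extSEIR_DFE_unstable_general βa βs ε δ γa γs τH hε hδ hγa hγs hτH J hJ hR₀
end

section
/- With P^b an l×l symmetric positive definite real matrix, R an m×m symmetric positive definite real matrix, H an m×l real matrix, K = P^b Hᵀ (H P^b Hᵀ + R)⁻¹ the Kalman gain, and given vectors x^b in ℝ^l and y in ℝ^m, the quadratic cost function J(x) = (x − x^b)ᵀ (P^b)⁻¹ (x − x^b) + (y − H x)ᵀ R⁻¹ (y − H x) attains its unique global minimum over ℝ^l at the Kalman analysis x^a = x^b + K (y − H x^b). -/
/-!
Expanding `J` around `x^a` gives `J x = J x^a + (x - x^a)ᵀ (P^b⁻¹ + Hᵀ R⁻¹ H) (x - x^a)`: the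
linear term vanishes because, by the push-through identity, `(P^b⁻¹ + Hᵀ R⁻¹ H) K = Hᵀ R⁻¹`,
which is exactly the stationarity condition `P^b⁻¹ (x^a - x^b) = Hᵀ R⁻¹ (y - H x^a)`. The
Hessian `P^b⁻¹ + Hᵀ R⁻¹ H` is positive definite, so `x^a` is the strict global minimiser.
-/

namespace Matrix

variable {n p : Type*} [Fintype n] [Fintype p]

section CommRing

variable {α : Type*} [CommRing α]

lemma IsSymm.dotProduct_mulVec_comm {M : Matrix n n α} (hM : M.IsSymm) (u v : n → α) :
    u ⬝ᵥ M *ᵥ v = v ⬝ᵥ M *ᵥ u := by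
  rw [← dotProduct_transpose_mulVec, hM.eq]

/-- Completing the square around `x₀`, where `hx₀` says that the gradient vanishes. -/
lemma cost_eq_cost_add_quadForm {M : Matrix n n α} {N : Matrix p p α} (hM : M.IsSymm)
    (hN : N.IsSymm) {H : Matrix p n α} {c x₀ : n → α} {d : p → α}
    (hx₀ : M *ᵥ (x₀ - c) = Hᵀ *ᵥ (N *ᵥ (d - H *ᵥ x₀))) (x : n → α) :
    (x - c) ⬝ᵥ M *ᵥ (x - c) + (d - H *ᵥ x) ⬝ᵥ N *ᵥ (d - H *ᵥ x) =
      (x₀ - c) ⬝ᵥ M *ᵥ (x₀ - c) + (d - H *ᵥ x₀) ⬝ᵥ N *ᵥ (d - H *ᵥ x₀) +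
        (x - x₀) ⬝ᵥ (M + Hᵀ * N * H) *ᵥ (x - x₀) := by
  have hxc : x - c = (x - x₀) + (x₀ - c) := by abel
  have hdx : d - H *ᵥ x = (d - H *ᵥ x₀) - H *ᵥ (x - x₀) := by rw [mulVec_sub]; abel
  have hcross : H *ᵥ (x - x₀) ⬝ᵥ N *ᵥ (d - H *ᵥ x₀) = (x - x₀) ⬝ᵥ M *ᵥ (x₀ - c) := by
    rw [dotProduct_comm, ← dotProduct_transpose_mulVec, hx₀]
  have hhess :
      H *ᵥ (x - x₀) ⬝ᵥ N *ᵥ (H *ᵥ (x - x₀)) = (x - x₀) ⬝ᵥ (Hᵀ * N * H) *ᵥ (x - x₀) := by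
    rw [dotProduct_comm, ← dotProduct_transpose_mulVec, mulVec_mulVec, mulVec_mulVec]
  rw [hxc, hdx, add_mulVec, dotProduct_add]
  generalize x - x₀ = u at hcross hhess ⊢
  generalize x₀ - c = a at hcross ⊢
  generalize d - H *ᵥ x₀ = b at hcross ⊢
  simp only [mulVec_add, mulVec_sub, dotProduct_add, add_dotProduct, dotProduct_sub,
    sub_dotProduct]
  rw [hM.dotProduct_mulVec_comm a u, hN.dotProduct_mulVec_comm b (H *ᵥ u), hcross, hhess]
  ring

lemma mulVec_mulVec_eq_of_add_mul_eq {M : Matrix n n α} {N : Matrix p p α} {H : Matrix p n α}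
    {K : Matrix n p α} (hK : (M + Hᵀ * N * H) * K = Hᵀ * N) (r : p → α) :
    M *ᵥ (K *ᵥ r) = Hᵀ *ᵥ (N *ᵥ (r - H *ᵥ (K *ᵥ r))) := by
  have hMK : M * K = Hᵀ * N - Hᵀ * N * H * K :=
    eq_sub_of_add_eq (by rw [← Matrix.add_mul, hK])
  rw [mulVec_mulVec, hMK, mulVec_sub, mulVec_sub, sub_mulVec, mulVec_mulVec, mulVec_mulVec,
    mulVec_mulVec, mulVec_mulVec]

variable [DecidableEq n] [DecidableEq p]

/-- Push-through identity: `P Hᵀ (H P Hᵀ + R)⁻¹ = (P⁻¹ + Hᵀ R⁻¹ H)⁻¹ Hᵀ R⁻¹`. -/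
lemma inv_add_transpose_mul_inv_mul_mul_gain {P : Matrix n n α} {R : Matrix p p α}
    (hP : IsUnit P.det) (hR : IsUnit R.det) (H : Matrix p n α)
    (hS : IsUnit (H * P * Hᵀ + R).det) :
    (P⁻¹ + Hᵀ * R⁻¹ * H) * (P * Hᵀ * (H * P * Hᵀ + R)⁻¹) = Hᵀ * R⁻¹ := by
  have hPH : (P⁻¹ + Hᵀ * R⁻¹ * H) * (P * Hᵀ) = Hᵀ * R⁻¹ * (H * P * Hᵀ + R) := by
    rw [Matrix.add_mul, Matrix.mul_add, ← Matrix.mul_assoc P⁻¹, nonsing_inv_mul _ hP,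
      Matrix.mul_assoc _ R⁻¹ R, nonsing_inv_mul _ hR]
    simp only [Matrix.mul_assoc, Matrix.one_mul, Matrix.mul_one]
    abel
  rw [← Matrix.mul_assoc, hPH, Matrix.mul_assoc, mul_nonsing_inv _ hS, Matrix.mul_one]

end CommRing

lemma PosSemidef.mul_mul_transpose_add_posDef {P : Matrix n n ℝ} {R : Matrix p p ℝ}
    (hP : P.PosSemidef) (hR : R.PosDef) (H : Matrix p n ℝ) : (H * P * Hᵀ + R).PosDef :=
  PosDef.posSemidef_add (hP.mul_mul_conjTranspose_same H) hR

lemma PosDef.inv_add_transpose_mul_inv_mul [DecidableEq n] [DecidableEq p] {P : Matrix n n ℝ}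
    {R : Matrix p p ℝ} (hP : P.PosDef) (hR : R.PosDef) (H : Matrix p n ℝ) :
    (P⁻¹ + Hᵀ * R⁻¹ * H).PosDef :=
  hP.inv.add_posSemidef (hR.inv.posSemidef.conjTranspose_mul_mul_same H)

end Matrix

open Matrix

/-- The quadratic cost `J(x) = (x - x^b)ᵀ (P^b)⁻¹ (x - x^b) + (y - Hx)ᵀ R⁻¹ (y - Hx)`
attains its unique global minimum over `ℝ^l` at the Kalman analysis
`x^a = x^b + K (y - H x^b)`. -/
theorem kalman_analysis_minimizes_cost
    (l m : ℕ)
    (Pb : Matrix (Fin l) (Fin l) ℝ) (hPb : Pb.PosDef)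
    (R : Matrix (Fin m) (Fin m) ℝ) (hR : R.PosDef)
    (H : Matrix (Fin m) (Fin l) ℝ)
    (K : Matrix (Fin l) (Fin m) ℝ)
    (hK : K = Pb * Hᵀ * (H * Pb * Hᵀ + R)⁻¹)
    (xb : Fin l → ℝ) (y : Fin m → ℝ)
    (J : (Fin l → ℝ) → ℝ)
    (hJ : ∀ x, J x = (x - xb) ⬝ᵥ (Pb⁻¹ *ᵥ (x - xb)) +
      (y - H *ᵥ x) ⬝ᵥ (R⁻¹ *ᵥ (y - H *ᵥ x)))
    (xa : Fin l → ℝ)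
    (hxa : xa = xb + K *ᵥ (y - H *ᵥ xb)) :
    (∀ x, J xa ≤ J x) ∧ (∀ x, x ≠ xa → J xa < J x) := by
  have hA := hPb.inv_add_transpose_mul_inv_mul hR H
  have hgain : (Pb⁻¹ + Hᵀ * R⁻¹ * H) * K = Hᵀ * R⁻¹ := by
    rw [hK]
    exact inv_add_transpose_mul_inv_mul_mul_gain hPb.det_pos.ne'.isUnit hR.det_pos.ne'.isUnit H
      (hPb.posSemidef.mul_mul_transpose_add_posDef hR H).det_pos.ne'.isUnit
  have hstationary : Pb⁻¹ *ᵥ (xa - xb) = Hᵀ *ᵥ (R⁻¹ *ᵥ (y - H *ᵥ xa)) := by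
    have hres : y - H *ᵥ xa = y - H *ᵥ xb - H *ᵥ (K *ᵥ (y - H *ᵥ xb)) := by
      rw [hxa, mulVec_add]; abel
    rw [hres, hxa, add_sub_cancel_left]
    exact mulVec_mulVec_eq_of_add_mul_eq hgain _
  have hJxa (x : Fin l → ℝ) :
      J x = J xa + (x - xa) ⬝ᵥ (Pb⁻¹ + Hᵀ * R⁻¹ * H) *ᵥ (x - xa) := by
    rw [hJ, hJ]
    exact cost_eq_cost_add_quadForm (isHermitian_iff_isSymm.mp hPb.inv.isHermitian)
      (isHermitian_iff_isSymm.mp hR.inv.isHermitian) hstationary x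
  refine ⟨fun x => ?_, fun x hx => ?_⟩
  · rw [hJxa x]
    simpa using hA.posSemidef.dotProduct_mulVec_nonneg (x - xa)
  · rw [hJxa x]
    simpa using hA.dotProduct_mulVec_pos (sub_ne_zero.mpr hx)
end

section
/- Let k ≥ 2, X^b an l×k real matrix whose columns sum to zero (i.e. X^b 𝟙 = 0 for the all-ones vector 𝟙 ∈ ℝ^k), H an m×l real matrix, R an m×m symmetric positive definite real matrix, and P̃^a = ((k − 1) I_k + (H X^b)ᵀ R⁻¹ H X^b)⁻¹. Then (k − 1) P̃^a 𝟙 = 𝟙, the symmetric positive semidefinite square root W of (k − 1) P̃^a also satisfies W 𝟙 = 𝟙, and consequently the analysis perturbation matrix X^a = X^b W has columns summing to zero (X^a 𝟙 = 0); that is, the ETKF transform preserves the ensemble mean. -/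
/-!
Because `H X^b 𝟙 = 0`, the vector `𝟙` is an eigenvector of
`(k - 1) I + (H X^b)ᵀ R⁻¹ H X^b` with eigenvalue `k - 1`, so `(k - 1) P̃^a 𝟙 = 𝟙`.
A positive semidefinite `W` with `W² 𝟙 = 𝟙` fixes `𝟙`, because `(W + I)(W - I) 𝟙 = 0`
and `W + I` is invertible.
-/

open Matrix

namespace Matrix

variable {n K : Type*} [Fintype n] [DecidableEq n] [Field K]

theorem inv_mulVec_eq_inv_smul_of_mulVec_eq_smul {A : Matrix n n K} (hA : IsUnit A)
    {c : K} (hc : c ≠ 0) {v : n → K} (hv : A *ᵥ v = c • v) : A⁻¹ *ᵥ v = c⁻¹ • v := by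
  have := hA.invertible
  exact inv_mulVec_eq_vec (by rw [mulVec_smul, hv, inv_smul_smul₀ hc])

theorem PosSemidef.mulVec_eq_self_of_mul_self_mulVec_eq_self [PartialOrder K] [StarRing K]
    [StarOrderedRing K] {W : Matrix n n K} (hW : W.PosSemidef) {v : n → K}
    (hv : (W * W) *ᵥ v = v) : W *ᵥ v = v := by
  have hunit : IsUnit (W + 1) := (PosDef.posSemidef_add hW PosDef.one).isUnit
  refine sub_eq_zero.mp (mulVec_injective_iff_isUnit.mpr hunit ?_)
  rw [mulVec_zero, mulVec_sub, add_mulVec, add_mulVec, mulVec_mulVec, hv, one_mulVec,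
    one_mulVec]
  abel

end Matrix

/-- If the columns of `X^b` sum to zero, then `(k - 1) P̃^a 𝟙 = 𝟙`, the symmetric
positive semidefinite square root `W` of `(k - 1) P̃^a` satisfies `W 𝟙 = 𝟙`, and the
analysis perturbation matrix `X^a = X^b W` has columns summing to zero: the ETKF
transform preserves the ensemble mean. -/
theorem etkf_transform_preserves_mean
    (k l m : ℕ) (hk : 2 ≤ k)
    (Xb : Matrix (Fin l) (Fin k) ℝ)
    (hXb : Xb *ᵥ (fun _ => (1 : ℝ)) = 0)
    (H : Matrix (Fin m) (Fin l) ℝ)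
    (R : Matrix (Fin m) (Fin m) ℝ) (hR : R.PosDef)
    (Pa : Matrix (Fin k) (Fin k) ℝ)
    (hPa : Pa = (((k : ℝ) - 1) • (1 : Matrix (Fin k) (Fin k) ℝ) +
      (H * Xb)ᵀ * R⁻¹ * (H * Xb))⁻¹)
    (W : Matrix (Fin k) (Fin k) ℝ)
    (hW : W.PosSemidef) (hWsq : W * W = ((k : ℝ) - 1) • Pa)
    (Xa : Matrix (Fin l) (Fin k) ℝ)
    (hXa : Xa = Xb * W) :
    (((k : ℝ) - 1) • Pa) *ᵥ (fun _ => (1 : ℝ)) = (fun _ => (1 : ℝ)) ∧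
      W *ᵥ (fun _ => (1 : ℝ)) = (fun _ => (1 : ℝ)) ∧
      Xa *ᵥ (fun _ => (1 : ℝ)) = 0 := by
  set v : Fin k → ℝ := fun _ => 1
  set A : Matrix (Fin k) (Fin k) ℝ := ((k : ℝ) - 1) • 1 + (H * Xb)ᵀ * R⁻¹ * (H * Xb)
  have hc : (0 : ℝ) < k - 1 := by
    have : (2 : ℝ) ≤ k := by exact_mod_cast hk
    linarith
  have hA : A.PosDef := by
    simpa [A, conjTranspose_eq_transpose_of_trivial, Matrix.mul_assoc] using
      (PosDef.one.smul hc).add_posSemidef (hR.inv.posSemidef.conjTranspose_mul_mul_same (H * Xb))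
  have hA_one : A *ᵥ v = ((k : ℝ) - 1) • v := by
    simp [A, add_mulVec, smul_mulVec, ← mulVec_mulVec, hXb]
  have hPa_one : (((k : ℝ) - 1) • Pa) *ᵥ v = v := by
    rw [hPa, smul_mulVec, inv_mulVec_eq_inv_smul_of_mulVec_eq_smul hA.isUnit hc.ne' hA_one,
      smul_inv_smul₀ hc.ne']
  have hW_one : W *ᵥ v = v := hW.mulVec_eq_self_of_mul_self_mulVec_eq_self (by rw [hWsq, hPa_one])
  exact ⟨hPa_one, hW_one, by rw [hXa, ← mulVec_mulVec, hW_one, hXb]⟩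
end
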